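/- Landau's theorem: let f : [1, ∞) → ℝ be locally integrable and suppose f(x) ≥ 0 for all sufficiently large x. Let σ_c be the infimum of real σ such that the integral g(s) = ∫₁^∞ f(x) x^{−s−1} dx converges for Re(s) > σ. If σ_c is finite, then g cannot be extended to a function analytic in a neighborhood of the real point s = σ_c. -/

import Mathlib

/-!
If `g` were analytic near `σc`, its Taylor series at a real point `a > σc` would converge at a
real point `a - ε < σc`. Differentiating under the integral sign, the `n`-th Taylor coefficient
is `(-1)ⁿ / n! · ∫₁^∞ f(x) (log x)ⁿ x^{-a-1} dx`, so `∑ εⁿ / n! · ∫₁^∞ f(x) (log x)ⁿ x^{-a-1} dx`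
converges. Where `f ≥ 0` these integrands are nonnegative, so by monotone convergence sum and
integral may be exchanged, and `∑ (ε log x)ⁿ / n! = x^ε` turns the sum into
`∫ f(x) x^{-(a-ε)-1} dx`; the bounded range where `f` may change sign is harmless. Hence
`a - ε` lies in the half-line of convergence, contradicting the definition of `σc`.
-/

open MeasureTheory Filter Set
open scoped Nat

theorem MeasureTheory.integrable_iff_summable_integral_of_hasSum {α : Type*} [MeasurableSpace α]
    {μ : Measure α} {ψ : ℕ → α → ℝ} {Ψ : α → ℝ} (hψ : ∀ n, Integrable (ψ n) μ)
    (hψ_nonneg : ∀ n, ∀ᵐ x ∂μ, 0 ≤ ψ n x) (hΨ_sum : ∀ᵐ x ∂μ, HasSum (fun n => ψ n x) (Ψ x))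
    (hΨ : AEStronglyMeasurable Ψ μ) :
    Integrable Ψ μ ↔ Summable fun n => ∫ x, ψ n x ∂μ := by
  have hΨ_nonneg : 0 ≤ᵐ[μ] Ψ := by
    filter_upwards [ae_all_iff.2 hψ_nonneg, hΨ_sum] with x hx hsum
    exact hsum.nonneg hx
  have hlintegral : ∫⁻ x, ENNReal.ofReal (Ψ x) ∂μ = ∑' n, ENNReal.ofReal (∫ x, ψ n x ∂μ) :=
    calc ∫⁻ x, ENNReal.ofReal (Ψ x) ∂μ = ∫⁻ x, ∑' n, ENNReal.ofReal (ψ n x) ∂μ := by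
          refine lintegral_congr_ae ?_
          filter_upwards [ae_all_iff.2 hψ_nonneg, hΨ_sum] with x hx hsum
          rw [← hsum.tsum_eq, ENNReal.ofReal_tsum_of_nonneg hx hsum.summable]
      _ = ∑' n, ∫⁻ x, ENNReal.ofReal (ψ n x) ∂μ :=
          lintegral_tsum fun n => (hψ n).aemeasurable.ennreal_ofReal
      _ = ∑' n, ENNReal.ofReal (∫ x, ψ n x ∂μ) := by
          congr 1 with n
          exact (ofReal_integral_eq_lintegral_ofReal (hψ n) (hψ_nonneg n)).symm
  rw [Integrable, hasFiniteIntegral_iff_ofReal hΨ_nonneg, hlintegral]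
  refine ⟨fun h => ?_, fun h => ⟨hΨ, h.tsum_ofReal_lt_top⟩⟩
  exact (ENNReal.summable_toReal h.2.ne).congr fun n =>
    ENNReal.toReal_ofReal (integral_nonneg_of_ae (hψ_nonneg n))

theorem Real.log_pow_le_factorial_div_mul_rpow {x δ : ℝ} (hx : 1 ≤ x) (hδ : 0 < δ) (n : ℕ) :
    Real.log x ^ n ≤ n ! / δ ^ n * x ^ δ := by
  have hexp : (δ * Real.log x) ^ n / n ! ≤ x ^ δ := by
    rw [Real.rpow_def_of_pos (by linarith), mul_comm (Real.log x)]
    exact Real.pow_div_factorial_le_exp _ (mul_nonneg hδ.le (Real.log_nonneg hx)) n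
  rw [mul_pow, div_le_iff₀ (by positivity)] at hexp
  rw [div_mul_eq_mul_div, le_div_iff₀ (by positivity)]
  linarith

theorem Real.hasSum_mul_log_pow_div_factorial {x : ℝ} (hx : 0 < x) (ε : ℝ) :
    HasSum (fun n : ℕ => ε ^ n / n ! * Real.log x ^ n) (x ^ ε) := by
  rw [Real.rpow_def_of_pos hx, Real.exp_eq_exp_ℝ]
  convert! NormedSpace.expSeries_div_hasSum_exp (Real.log x * ε) using 1
  funext n
  ring

theorem iteratedDeriv_eq_of_hasDerivAt {𝕜 F : Type*} [NontriviallyNormedField 𝕜]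
    [NormedAddCommGroup F] [NormedSpace 𝕜 F] {G : ℕ → 𝕜 → F} {U : Set 𝕜} (hU : IsOpen U)
    (hG : ∀ n, ∀ z ∈ U, HasDerivAt (G n) (G (n + 1) z) z) (n : ℕ) {z : 𝕜} (hz : z ∈ U) :
    iteratedDeriv n (G 0) z = G n z := by
  induction n generalizing z with
  | zero => rw [iteratedDeriv_zero]
  | succ n ih =>
    rw [iteratedDeriv_succ, (eventuallyEq_of_mem (hU.mem_nhds hz) fun w hw => ih hw).deriv_eq]
    exact (hG n z hz).deriv

namespace Landau

variable {f : ℝ → ℝ}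

theorem integrableOn_mul_log_pow_mul_rpow {τ σ : ℝ}
    (hτ : IntegrableOn (fun x => f x * x ^ (-τ - 1)) (Ici 1)) (hτσ : τ < σ) (n : ℕ) :
    IntegrableOn (fun x => f x * Real.log x ^ n * x ^ (-σ - 1)) (Ici 1) := by
  have hmeas : AEStronglyMeasurable (fun x : ℝ => Real.log x ^ n * x ^ (τ - σ))
      (volume.restrict (Ici 1)) :=
    ((Real.measurable_log.pow_const n).mul (measurable_id.pow_const _)).aestronglyMeasurable
  have hbound : ∀ᵐ x ∂volume.restrict (Ici (1 : ℝ)),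
      ‖Real.log x ^ n * x ^ (τ - σ)‖ ≤ n ! / (σ - τ) ^ n := by
    filter_upwards [ae_restrict_mem measurableSet_Ici] with x (hx : 1 ≤ x)
    have hx0 : 0 < x := by linarith
    have hlog := Real.log_nonneg hx
    rw [Real.norm_of_nonneg (by positivity)]
    calc Real.log x ^ n * x ^ (τ - σ)
        ≤ n ! / (σ - τ) ^ n * x ^ (σ - τ) * x ^ (τ - σ) := by
          gcongr
          exact Real.log_pow_le_factorial_div_mul_rpow hx (sub_pos.2 hτσ) n
      _ = n ! / (σ - τ) ^ n := by rw [mul_assoc, ← Real.rpow_add hx0]; simp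
  refine IntegrableOn.congr_fun (hτ.bdd_mul hmeas hbound) (fun x (hx : 1 ≤ x) => ?_)
    measurableSet_Ici
  rw [show -σ - 1 = (τ - σ) + (-τ - 1) by ring, Real.rpow_add (by linarith)]
  ring

theorem hasSum_mul_log_pow_mul_rpow {x : ℝ} (hx : 0 < x) (c a ε : ℝ) :
    HasSum (fun n : ℕ => ε ^ n / n ! * (c * Real.log x ^ n * x ^ (-a - 1)))
      (c * x ^ (-(a - ε) - 1)) := by
  convert! (Real.hasSum_mul_log_pow_div_factorial hx ε).mul_left (c * x ^ (-a - 1)) using 1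
  · funext n
    ring
  · rw [show -(a - ε) - 1 = (-a - 1) + ε by ring, Real.rpow_add hx]
    ring

theorem summable_integral_Ico_mul_log_pow_mul_rpow (hf : LocallyIntegrableOn f (Ici 1))
    (a X : ℝ) {ε : ℝ} (hε : 0 ≤ ε) :
    Summable fun n : ℕ => ε ^ n / n ! * ∫ x in Ico 1 X, f x * Real.log x ^ n * x ^ (-a - 1) := by
  have hfI : IntegrableOn (fun x => |f x|) (Icc 1 X) :=
    (hf.integrableOn_compact_subset Icc_subset_Ici_self isCompact_Icc).abs
  have hpow : ∀ c : ℝ, ContinuousOn (fun x : ℝ => x ^ c) (Icc 1 X) := fun c =>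
    continuousOn_id.rpow_const fun x hx => Or.inl (zero_lt_one.trans_le hx.1).ne'
  have hφ : ∀ n : ℕ, IntegrableOn (fun x => |f x| * Real.log x ^ n * x ^ (-a - 1)) (Ico 1 X) :=
    fun n => by
      have hcont : ContinuousOn (fun x : ℝ => Real.log x ^ n * x ^ (-a - 1)) (Icc 1 X) :=
        ((Real.continuousOn_log.mono fun x hx => (zero_lt_one.trans_le hx.1).ne').pow n).mul
          (hpow _)
      simpa only [mul_assoc] using
        (hfI.mul_continuousOn hcont isCompact_Icc).mono_set Ico_subset_Icc_self
  have hΨ : IntegrableOn (fun x => |f x| * x ^ (-(a - ε) - 1)) (Ico 1 X) :=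
    (hfI.mul_continuousOn (hpow _) isCompact_Icc).mono_set Ico_subset_Icc_self
  have hnonneg : ∀ n : ℕ, ∀ᵐ x ∂volume.restrict (Ico 1 X),
      0 ≤ ε ^ n / n ! * (|f x| * Real.log x ^ n * x ^ (-a - 1)) := fun n => by
    filter_upwards [ae_restrict_mem measurableSet_Ico] with x hx
    have hx0 : 0 < x := zero_lt_one.trans_le hx.1
    have hlog := Real.log_nonneg hx.1
    positivity
  have hsum : ∀ᵐ x ∂volume.restrict (Ico 1 X), HasSum
      (fun n : ℕ => ε ^ n / n ! * (|f x| * Real.log x ^ n * x ^ (-a - 1)))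
      (|f x| * x ^ (-(a - ε) - 1)) := by
    filter_upwards [ae_restrict_mem measurableSet_Ico] with x hx
    exact hasSum_mul_log_pow_mul_rpow (zero_lt_one.trans_le hx.1) _ a ε
  refine ((integrable_iff_summable_integral_of_hasSum (fun n => (hφ n).const_mul _) hnonneg
    hsum hΨ.aestronglyMeasurable).1 hΨ).of_norm_bounded fun n => ?_
  rw [integral_const_mul, norm_mul, Real.norm_of_nonneg (by positivity)]
  gcongr
  refine norm_integral_le_of_norm_le (hφ n) ?_
  filter_upwards [ae_restrict_mem measurableSet_Ico] with x hx
  rw [norm_mul, norm_mul, Real.norm_eq_abs,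
    Real.norm_of_nonneg (pow_nonneg (Real.log_nonneg hx.1) n),
    Real.norm_of_nonneg (Real.rpow_nonneg (zero_le_one.trans hx.1) _)]

theorem integrableOn_Ici_mul_rpow_of_summable {a ε X : ℝ} (hX : 1 ≤ X)
    (hfX : ∀ x, X ≤ x → 0 ≤ f x) (hε : 0 ≤ ε)
    (hint : ∀ n : ℕ, IntegrableOn (fun x => f x * Real.log x ^ n * x ^ (-a - 1)) (Ici X))
    (hsum : Summable fun n : ℕ =>
      ε ^ n / n ! * ∫ x in Ici X, f x * Real.log x ^ n * x ^ (-a - 1)) :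
    IntegrableOn (fun x => f x * x ^ (-(a - ε) - 1)) (Ici X) := by
  have hmeas : AEStronglyMeasurable (fun x => f x * x ^ (-(a - ε) - 1))
      (volume.restrict (Ici X)) := by
    refine ((hint 0).aestronglyMeasurable.mul
      (measurable_id.pow_const ε).aestronglyMeasurable).congr ?_
    filter_upwards [ae_restrict_mem measurableSet_Ici] with x (hx : X ≤ x)
    rw [show -(a - ε) - 1 = (-a - 1) + ε by ring,
      Real.rpow_add (zero_lt_one.trans_le (hX.trans hx))]
    simp only [Pi.mul_apply, id, pow_zero, mul_one, mul_assoc]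
  refine (integrable_iff_summable_integral_of_hasSum (fun n => (hint n).const_mul _)
    (fun n => ?_) ?_ hmeas).2 (by simpa only [integral_const_mul] using hsum)
  · filter_upwards [ae_restrict_mem measurableSet_Ici] with x (hx : X ≤ x)
    have hx0 : 0 < x := zero_lt_one.trans_le (hX.trans hx)
    have hfx := hfX x hx
    have hlog := Real.log_nonneg (hX.trans hx)
    positivity
  · filter_upwards [ae_restrict_mem measurableSet_Ici] with x (hx : X ≤ x)
    exact hasSum_mul_log_pow_mul_rpow (zero_lt_one.trans_le (hX.trans hx)) _ a ε

theorem integrableOn_mul_rpow_of_summable (hf : LocallyIntegrableOn f (Ici 1))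
    (hpos : ∀ᶠ x in atTop, 0 ≤ f x) {a ε : ℝ} (hε : 0 ≤ ε)
    (hint : ∀ n : ℕ, IntegrableOn (fun x => f x * Real.log x ^ n * x ^ (-a - 1)) (Ici 1))
    (hsum : Summable fun n : ℕ =>
      ε ^ n / n ! * ∫ x in Ici 1, f x * Real.log x ^ n * x ^ (-a - 1)) :
    IntegrableOn (fun x => f x * x ^ (-(a - ε) - 1)) (Ici 1) := by
  obtain ⟨X, hX⟩ := eventually_atTop.1 (hpos.and (eventually_ge_atTop 1))
  have hX1 : 1 ≤ X := (hX X le_rfl).2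
  have hsplit : ∀ n : ℕ, ∫ x in Ici 1, f x * Real.log x ^ n * x ^ (-a - 1) =
      (∫ x in Ico 1 X, f x * Real.log x ^ n * x ^ (-a - 1)) +
        ∫ x in Ici X, f x * Real.log x ^ n * x ^ (-a - 1) := fun n => by
    rw [← setIntegral_union ((Iio_disjoint_Ici le_rfl).mono_left Ico_subset_Iio_self)
      measurableSet_Ici ((hint n).mono_set Ico_subset_Ici_self)
      ((hint n).mono_set (Ici_subset_Ici.2 hX1)), Ico_union_Ici_eq_Ici hX1]
  have htail := integrableOn_Ici_mul_rpow_of_summable hX1 (fun x hx => (hX x hx).1) hε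
    (fun n => (hint n).mono_set (Ici_subset_Ici.2 hX1))
    ((hsum.sub (summable_integral_Ico_mul_log_pow_mul_rpow hf a X hε)).congr
      fun n => by rw [hsplit]; ring)
  have hhead : IntegrableOn (fun x => f x * x ^ (-(a - ε) - 1)) (Ico 1 X) :=
    ((hf.integrableOn_compact_subset Icc_subset_Ici_self isCompact_Icc).mul_continuousOn
      (continuousOn_id.rpow_const fun x hx => Or.inl (zero_lt_one.trans_le hx.1).ne')
      isCompact_Icc).mono_set Ico_subset_Icc_self
  rw [← Ico_union_Ici_eq_Ici hX1]
  exact hhead.union htail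

noncomputable def transformIntegrand (f : ℝ → ℝ) (n : ℕ) (s : ℂ) (x : ℝ) : ℂ :=
  f x * (-Real.log x : ℂ) ^ n * (x : ℂ) ^ (-s - 1)

noncomputable def transformDeriv (f : ℝ → ℝ) (n : ℕ) (s : ℂ) : ℂ :=
  ∫ x in Ici (1 : ℝ), transformIntegrand f n s x

theorem norm_transformIntegrand {x : ℝ} (hx : 1 ≤ x) (n : ℕ) (s : ℂ) :
    ‖transformIntegrand f n s x‖ = ‖f x * Real.log x ^ n * x ^ (-s.re - 1)‖ := by
  have hx0 : 0 < x := zero_lt_one.trans_le hx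
  simp [transformIntegrand, Complex.norm_cpow_eq_rpow_re_of_pos hx0,
    Real.norm_of_nonneg (Real.rpow_nonneg hx0.le _)]

theorem hasDerivAt_transformIntegrand {x : ℝ} (hx : 0 < x) (n : ℕ) (s : ℂ) :
    HasDerivAt (fun s => transformIntegrand f n s x) (transformIntegrand f (n + 1) s x) s := by
  have hcpow := ((hasDerivAt_id s).neg.sub_const 1).const_cpow
    (c := (x : ℂ)) (Or.inl (Complex.ofReal_ne_zero.2 hx.ne'))
  simp only [transformIntegrand]
  refine (hcpow.const_mul ((f x : ℂ) * (-Real.log x : ℂ) ^ n)).congr_deriv ?_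
  rw [pow_succ, Complex.ofReal_log hx.le]
  simp only [Pi.neg_apply, id]
  ring

theorem aestronglyMeasurable_transformIntegrand
    (hf : AEStronglyMeasurable f (volume.restrict (Ici 1))) (n : ℕ) (s : ℂ) :
    AEStronglyMeasurable (transformIntegrand f n s) (volume.restrict (Ici 1)) :=
  ((Complex.continuous_ofReal.comp_aestronglyMeasurable hf).mul
    ((Complex.measurable_ofReal.comp Real.measurable_log).neg.pow_const n).aestronglyMeasurable).mul
    (Complex.measurable_ofReal.pow_const _).aestronglyMeasurable

theorem integrableOn_transformIntegrand
    (hf : AEStronglyMeasurable f (volume.restrict (Ici 1))) {n : ℕ} {s : ℂ}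
    (hint : IntegrableOn (fun x => f x * Real.log x ^ n * x ^ (-s.re - 1)) (Ici 1)) :
    IntegrableOn (transformIntegrand f n s) (Ici 1) :=
  hint.norm.mono' (aestronglyMeasurable_transformIntegrand hf n s) <| by
    filter_upwards [ae_restrict_mem measurableSet_Ici] with x hx
    exact (norm_transformIntegrand hx n s).le

theorem hasDerivAt_transformDeriv {σ₀ : ℝ}
    (hf : AEStronglyMeasurable f (volume.restrict (Ici 1)))
    (hint : ∀ σ, σ₀ < σ → ∀ n : ℕ,
      IntegrableOn (fun x => f x * Real.log x ^ n * x ^ (-σ - 1)) (Ici 1))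
    {s : ℂ} (hs : σ₀ < s.re) (n : ℕ) :
    HasDerivAt (transformDeriv f n) (transformDeriv f (n + 1) s) s := by
  set δ := (s.re - σ₀) / 2
  have hδ : 0 < δ := by simp only [δ]; linarith
  have hre : ∀ z ∈ Metric.ball s δ, σ₀ + δ ≤ z.re := fun z hz => by
    have := (abs_le.1 ((Complex.abs_re_le_norm (z - s)).trans (mem_ball_iff_norm.1 hz).le)).1
    simp only [Complex.sub_re, δ] at this ⊢
    linarith
  refine (hasDerivAt_integral_of_dominated_loc_of_deriv_le (Metric.ball_mem_nhds s hδ)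
    (Eventually.of_forall fun z => aestronglyMeasurable_transformIntegrand hf n z)
    (integrableOn_transformIntegrand hf (hint _ hs n))
    (aestronglyMeasurable_transformIntegrand hf (n + 1) s)
    (bound := fun x => ‖f x * Real.log x ^ (n + 1) * x ^ (-(σ₀ + δ) - 1)‖) ?_
    (hint _ (by linarith) (n + 1)).norm ?_).2
  · filter_upwards [ae_restrict_mem measurableSet_Ici] with x (hx : 1 ≤ x) z hz
    have hx0 : 0 < x := zero_lt_one.trans_le hx
    rw [norm_transformIntegrand hx, norm_mul, norm_mul _ (x ^ _),
      Real.norm_of_nonneg (Real.rpow_nonneg hx0.le _),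
      Real.norm_of_nonneg (Real.rpow_nonneg hx0.le _)]
    gcongr
    exact hre z hz
  · filter_upwards [ae_restrict_mem measurableSet_Ici] with x (hx : 1 ≤ x) z _
    exact hasDerivAt_transformIntegrand (zero_lt_one.trans_le hx) n z

theorem iteratedDeriv_eq_transformDeriv {σ₀ : ℝ}
    (hf : AEStronglyMeasurable f (volume.restrict (Ici 1)))
    (hint : ∀ σ, σ₀ < σ → ∀ n : ℕ,
      IntegrableOn (fun x => f x * Real.log x ^ n * x ^ (-σ - 1)) (Ici 1))
    {g : ℂ → ℂ} (hg : ∀ s : ℂ, σ₀ < s.re → g s = transformDeriv f 0 s)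
    {s : ℂ} (hs : σ₀ < s.re) (n : ℕ) :
    iteratedDeriv n g s = transformDeriv f n s := by
  have hU : IsOpen {z : ℂ | σ₀ < z.re} := isOpen_lt continuous_const Complex.continuous_re
  rw [(eventuallyEq_of_mem (hU.mem_nhds hs) hg).iteratedDeriv_eq]
  exact iteratedDeriv_eq_of_hasDerivAt hU (fun n _ hz => hasDerivAt_transformDeriv hf hint hz n)
    n hs

theorem transformDeriv_ofReal (n : ℕ) (σ : ℝ) :
    transformDeriv f n σ = ((-1) ^ n * ∫ x in Ici 1, f x * Real.log x ^ n * x ^ (-σ - 1) : ℝ) := by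
  rw [← integral_const_mul, ← integral_complex_ofReal, transformDeriv]
  refine setIntegral_congr_fun measurableSet_Ici fun x (hx : 1 ≤ x) => ?_
  rw [transformIntegrand, show -(σ : ℂ) - 1 = ((-σ - 1 : ℝ) : ℂ) by push_cast; ring,
    ← Complex.ofReal_cpow (zero_le_one.trans hx)]
  push_cast
  ring

theorem summable_logMoments_of_differentiableOn_ball {σ₀ : ℝ}
    (hf : AEStronglyMeasurable f (volume.restrict (Ici 1)))
    (hint : ∀ σ, σ₀ < σ → ∀ n : ℕ,
      IntegrableOn (fun x => f x * Real.log x ^ n * x ^ (-σ - 1)) (Ici 1))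
    {g : ℂ → ℂ} (hg : ∀ s : ℂ, σ₀ < s.re → g s = transformDeriv f 0 s)
    {a ρ ε : ℝ} (ha : σ₀ < a) (hgd : DifferentiableOn ℂ g (Metric.ball (a : ℂ) ρ))
    (hε : |ε| < ρ) :
    Summable fun n : ℕ => ε ^ n / n ! * ∫ x in Ici 1, f x * Real.log x ^ n * x ^ (-a - 1) := by
  have hmem : ((a - ε : ℝ) : ℂ) ∈ Metric.ball (a : ℂ) ρ := by
    rwa [mem_ball_iff_norm, ← Complex.ofReal_sub, Complex.norm_real, sub_sub_cancel_left,
      norm_neg, Real.norm_eq_abs]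
  refine Complex.summable_ofReal.1
    ((Complex.hasSum_taylorSeries_on_ball hgd hmem).summable.congr fun n => ?_)
  rw [iteratedDeriv_eq_transformDeriv hf hint hg (by simpa using ha), transformDeriv_ofReal,
    smul_eq_mul, smul_eq_mul, ← Complex.ofReal_sub, sub_sub_cancel_left, neg_pow]
  push_cast
  ring_nf
  simp

end Landau

/-- Landau's theorem: if `f` is locally integrable on `[1, ∞)` and eventually
nonnegative, and `σc` is the abscissa of convergence of
`g(s) = ∫₁^∞ f(x) x^{-s-1} dx`, then `g` has no analytic continuation to a
neighbourhood of the real point `σc`. -/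
theorem stmt_14 (f : ℝ → ℝ) (hf : LocallyIntegrableOn f (Set.Ici 1))
    (hpos : ∀ᶠ x in atTop, 0 ≤ f x) (σc : ℝ)
    (hσc : IsGLB {σ : ℝ |
        IntegrableOn (fun x : ℝ => f x * x ^ (-σ - 1)) (Set.Ici 1)} σc) :
    ¬ ∃ (g : ℂ → ℂ) (U : Set ℂ), IsOpen U ∧ (σc : ℂ) ∈ U ∧
        AnalyticOnNhd ℂ g (U ∪ {s : ℂ | σc < s.re}) ∧
        ∀ s : ℂ, σc < s.re →
          g s = ∫ x in Set.Ici (1 : ℝ), (f x : ℂ) * (x : ℂ) ^ (-s - 1) := by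
  rintro ⟨g, U, hU, hσcU, hg, hg_eq⟩
  have hint : ∀ σ, σc < σ → ∀ n : ℕ,
      IntegrableOn (fun x => f x * Real.log x ^ n * x ^ (-σ - 1)) (Ici 1) := fun σ hσ n => by
    obtain ⟨τ, hτ, -, hτσ⟩ := hσc.exists_between hσ
    exact Landau.integrableOn_mul_log_pow_mul_rpow hτ hτσ n
  obtain ⟨r, hr, hball⟩ := Metric.isOpen_iff.1 hU _ hσcU
  have hdist : 3 * r / 4 + dist ((σc + r / 4 : ℝ) : ℂ) σc ≤ r := by
    rw [Complex.dist_eq, ← Complex.ofReal_sub, Complex.norm_real, add_sub_cancel_left,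
      Real.norm_of_nonneg (by positivity)]
    linarith
  have hgd : DifferentiableOn ℂ g (Metric.ball ((σc + r / 4 : ℝ) : ℂ) (3 * r / 4)) :=
    fun z hz => (hg z (Or.inl (hball (Metric.ball_subset_ball' hdist hz)))).differentiableAt
      |>.differentiableWithinAt
  have hsum := Landau.summable_logMoments_of_differentiableOn_ball hf.aestronglyMeasurable hint
    (fun s hs => by simp [Landau.transformDeriv, Landau.transformIntegrand, hg_eq s hs])
    (by linarith : σc < σc + r / 4) hgd (ε := r / 2) (by rw [abs_of_pos] <;> linarith)
  have hσc_le := hσc.1 (Landau.integrableOn_mul_rpow_of_summable hf hpos (by positivity)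
    (hint _ (by linarith)) hsum)
  linarith
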